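/- In the Trimmed Graphical Lasso deterministic setting, under hypotheses (H1)–(H4) and assuming the off-diagonal support S of Θ* satisfies |S| ≤ k, the error matrix satisfies the Frobenius bound ‖Δ̃‖_F ≤ (1/κ)·((3λ/2)·√(k+p) + τ1). (Theorem 1, Frobenius-norm error bound.) -/

import Mathlib

/-!
Write `Δ = Θ̃ - Θ*`. Stationarity (H1), incoherence (H3) and Hölder's inequality under the
choice of `λ` (H4) bound `⟨Θ*⁻¹ - Θ̃⁻¹, Δ⟩` by
`λ (‖Θ*‖_{1,off} - ‖Θ̃‖_{1,off}) + (λ/2) ‖Δ‖₁ + τ₁ ‖Δ‖_F`, and an entrywise comparison bounds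
the first two terms by `3λ/2` times the `ℓ₁` mass of `Δ` on `S ∪ diag`, hence both by
`(3λ/2) √(k+p) ‖Δ‖_F` (Cauchy–Schwarz) and by `3λR`. Restricted strong convexity (H2) bounds
the same inner product from below by `κ ‖Δ‖_F²` when `‖Δ‖_F ≤ 1`, and, via monotonicity of
the matrix inverse, by `κ ‖Δ‖_F` otherwise. The second case contradicts `3λR ≤ κ - τ₁`;
dividing the first by `‖Δ‖_F` gives the bound.
-/

open Matrix

/-- Trace inner product ⟨U,V⟩ = tr(U Vᵀ). -/
noncomputable def traceInner {p : ℕ} (U V : Matrix (Fin p) (Fin p) ℝ) : ℝ :=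
  (U * Vᵀ).trace

/-- Frobenius norm. -/
noncomputable def frobNorm {p : ℕ} (U : Matrix (Fin p) (Fin p) ℝ) : ℝ :=
  Real.sqrt (∑ i, ∑ j, (U i j) ^ 2)

/-- Entrywise ℓ1 norm: ‖U‖₁ = Σ_{i,j} |U_{ij}|. -/
noncomputable def l1Norm {p : ℕ} (U : Matrix (Fin p) (Fin p) ℝ) : ℝ :=
  ∑ i, ∑ j, |U i j|

/-- Off-diagonal entrywise ℓ1 norm: ‖U‖_{1,off} = Σ_{i≠j} |U_{ij}|. -/
noncomputable def offNorm {p : ℕ} (U : Matrix (Fin p) (Fin p) ℝ) : ℝ :=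
  ∑ ij ∈ Finset.univ.filter (fun ij : Fin p × Fin p => ij.1 ≠ ij.2), |U ij.1 ij.2|

/-- Entrywise sup norm: ‖U‖_∞ = max_{i,j} |U_{ij}|. -/
noncomputable def linfNorm {p : ℕ} (U : Matrix (Fin p) (Fin p) ℝ) : ℝ :=
  ⨆ ij : Fin p × Fin p, |U ij.1 ij.2|


open scoped MatrixOrder ComplexOrder in
theorem Matrix.trace_mul_nonneg_of_posSemidef {n 𝕜 : Type*} [Fintype n] [DecidableEq n]
    [RCLike 𝕜] {A B : Matrix n n 𝕜} (hA : A.PosSemidef) (hB : B.PosSemidef) :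
    0 ≤ (A * B).trace := by
  obtain ⟨N, hNN, hN⟩ : ∃ N : Matrix n n 𝕜, N * N = B ∧ Nᴴ = N :=
    ⟨CFC.sqrt B, CFC.sqrt_mul_sqrt_self B hB.nonneg,
      (CFC.sqrt_nonneg B).posSemidef.isHermitian.eq⟩
  have hcycle : (A * B).trace = (Nᴴ * A * N).trace := by
    rw [← hNN, hN, ← Matrix.mul_assoc, Matrix.trace_mul_comm, Matrix.mul_assoc]
  rw [hcycle]
  exact (hA.conjTranspose_mul_mul_same N).trace_nonneg

theorem Matrix.PosDef.isSymm_sub {n : Type*} [Fintype n] {A B : Matrix n n ℝ}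
    (hA : A.PosDef) (hB : B.PosDef) : (B - A).IsSymm := by
  simpa [Matrix.IsSymm, Matrix.conjTranspose_eq_transpose_of_trivial] using
    (hB.isHermitian.sub hA.isHermitian).eq

section EntrywiseNorms

variable {p : ℕ}

theorem traceInner_eq_sum (U V : Matrix (Fin p) (Fin p) ℝ) :
    traceInner U V = ∑ ij : Fin p × Fin p, U ij.1 ij.2 * V ij.1 ij.2 := by
  simp [traceInner, Matrix.trace, Matrix.mul_apply, Fintype.sum_prod_type]

theorem traceInner_add_left (U V W : Matrix (Fin p) (Fin p) ℝ) :
    traceInner (U + V) W = traceInner U W + traceInner V W := by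
  simp [traceInner, Matrix.add_mul]

theorem traceInner_smul_right (c : ℝ) (U V : Matrix (Fin p) (Fin p) ℝ) :
    traceInner U (c • V) = c * traceInner U V := by
  simp [traceInner]

theorem l1Norm_eq_sum (U : Matrix (Fin p) (Fin p) ℝ) :
    l1Norm U = ∑ ij : Fin p × Fin p, |U ij.1 ij.2| := by
  rw [Fintype.sum_prod_type]; rfl

theorem l1Norm_nonneg (U : Matrix (Fin p) (Fin p) ℝ) : 0 ≤ l1Norm U :=
  Finset.sum_nonneg fun _ _ => Finset.sum_nonneg fun _ _ => abs_nonneg _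

theorem l1Norm_sub_le (U V : Matrix (Fin p) (Fin p) ℝ) :
    l1Norm (U - V) ≤ l1Norm U + l1Norm V := by
  simp only [l1Norm_eq_sum, ← Finset.sum_add_distrib]
  exact Finset.sum_le_sum fun ij _ => abs_sub _ _

theorem sum_abs_le_l1Norm (U : Matrix (Fin p) (Fin p) ℝ) (s : Finset (Fin p × Fin p)) :
    ∑ ij ∈ s, |U ij.1 ij.2| ≤ l1Norm U := by
  rw [l1Norm_eq_sum]
  exact Finset.sum_le_sum_of_subset_of_nonneg (Finset.subset_univ s) fun _ _ _ => abs_nonneg _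

theorem frobNorm_eq_sqrt_sum (U : Matrix (Fin p) (Fin p) ℝ) :
    frobNorm U = √(∑ ij : Fin p × Fin p, U ij.1 ij.2 ^ 2) := by
  rw [Fintype.sum_prod_type]; rfl

theorem frobNorm_nonneg (U : Matrix (Fin p) (Fin p) ℝ) : 0 ≤ frobNorm U :=
  Real.sqrt_nonneg _

theorem frobNorm_smul (c : ℝ) (U : Matrix (Fin p) (Fin p) ℝ) :
    frobNorm (c • U) = |c| * frobNorm U := by
  simp only [frobNorm, Matrix.smul_apply, smul_eq_mul, mul_pow, ← Finset.mul_sum]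
  rw [Real.sqrt_mul (sq_nonneg c), Real.sqrt_sq_eq_abs]

theorem abs_le_linfNorm (U : Matrix (Fin p) (Fin p) ℝ) (ij : Fin p × Fin p) :
    |U ij.1 ij.2| ≤ linfNorm U :=
  le_ciSup (f := fun ij : Fin p × Fin p => |U ij.1 ij.2|) (Set.finite_range _).bddAbove ij

theorem abs_traceInner_le (U V : Matrix (Fin p) (Fin p) ℝ) :
    |traceInner U V| ≤ linfNorm U * l1Norm V := by
  rw [traceInner_eq_sum, l1Norm_eq_sum, Finset.mul_sum]
  refine (Finset.abs_sum_le_sum_abs _ _).trans (Finset.sum_le_sum fun ij _ => ?_)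
  rw [abs_mul]
  exact mul_le_mul_of_nonneg_right (abs_le_linfNorm U ij) (abs_nonneg _)

theorem sum_abs_le_sqrt_card_mul_frobNorm (U : Matrix (Fin p) (Fin p) ℝ)
    (s : Finset (Fin p × Fin p)) :
    ∑ ij ∈ s, |U ij.1 ij.2| ≤ √(s.card : ℝ) * frobNorm U := by
  rw [frobNorm_eq_sqrt_sum, ← Real.sqrt_mul (Nat.cast_nonneg _)]
  refine (le_abs_self _).trans (Real.abs_le_sqrt ?_)
  calc (∑ ij ∈ s, |U ij.1 ij.2|) ^ 2 ≤ s.card * ∑ ij ∈ s, |U ij.1 ij.2| ^ 2 :=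
        sq_sum_le_card_mul_sum_sq
    _ ≤ s.card * ∑ ij : Fin p × Fin p, U ij.1 ij.2 ^ 2 := by
        simp only [sq_abs]
        exact mul_le_mul_of_nonneg_left (Finset.sum_le_sum_of_subset_of_nonneg
          (Finset.subset_univ s) fun _ _ _ => sq_nonneg _) (Nat.cast_nonneg _)

end EntrywiseNorms

section Support

variable {p : ℕ}

open Finset

noncomputable def supportWithDiag (A : Matrix (Fin p) (Fin p) ℝ) : Finset (Fin p × Fin p) :=
  univ.filter fun ij => ij.1 = ij.2 ∨ A ij.1 ij.2 ≠ 0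

theorem card_supportWithDiag_le (A : Matrix (Fin p) (Fin p) ℝ) :
    #(supportWithDiag A)
      ≤ #(univ.filter fun ij : Fin p × Fin p => ij.1 ≠ ij.2 ∧ A ij.1 ij.2 ≠ 0) + p := by
  calc #(supportWithDiag A)
      ≤ #((univ.filter fun ij : Fin p × Fin p => ij.1 ≠ ij.2 ∧ A ij.1 ij.2 ≠ 0) ∪ univ.diag) := by
        refine card_le_card fun ij => ?_
        simp only [supportWithDiag, mem_union, mem_filter, mem_univ, true_and, mem_diag]
        tauto
    _ ≤ _ := (card_union_le _ _).trans (by simp [diag_card])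

theorem offNorm_sub_offNorm_add_half_l1Norm_le (A B : Matrix (Fin p) (Fin p) ℝ) :
    offNorm A - offNorm B + l1Norm (B - A) / 2
      ≤ 3 / 2 * ∑ ij ∈ supportWithDiag A, |(B - A) ij.1 ij.2| := by
  simp only [offNorm, supportWithDiag, l1Norm_eq_sum, sum_filter, ← sum_sub_distrib, sum_div,
    mul_sum, ← sum_add_distrib]
  refine sum_le_sum fun ij _ => ?_
  rw [Matrix.sub_apply]
  have htri := abs_sub_abs_le_abs_sub (A ij.1 ij.2) (B ij.1 ij.2)
  rw [abs_sub_comm] at htri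
  have hnonneg := abs_nonneg (B ij.1 ij.2 - A ij.1 ij.2)
  split_ifs with hoff hsupp hsupp
  · linarith
  · have hzero : A ij.1 ij.2 = 0 := by tauto
    simp only [hzero, abs_zero, sub_zero, mul_zero]
    linarith [abs_nonneg (B ij.1 ij.2)]
  · linarith
  · exact absurd (Or.inl (not_not.1 hoff)) hsupp

end Support

section InverseMonotonicity

variable {p : ℕ}

theorem traceInner_inv_sub_inv_sub_nonneg {A B : Matrix (Fin p) (Fin p) ℝ}
    (hA : A.PosDef) (hB : B.PosDef) : 0 ≤ traceInner (A⁻¹ - B⁻¹) (B - A) := by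
  rw [traceInner, Matrix.inv_sub_inv (by simp [hA.isUnit, hB.isUnit]), Matrix.mul_assoc,
    Matrix.mul_assoc]
  refine Matrix.trace_mul_nonneg_of_posSemidef hA.inv.posSemidef ?_
  simpa [Matrix.conjTranspose_eq_transpose_of_trivial, Matrix.mul_assoc] using
    hB.inv.posSemidef.mul_mul_conjTranspose_same (B - A)

/-- Compare `B` with the point `C = A + (B - A) / ‖B - A‖_F` of the unit sphere on the segment
from `A` to `B`: strong convexity applies at `C`, and monotonicity of the inverse carries the
bound from `C` on to `B`. -/
theorem mul_frobNorm_le_traceInner_of_one_lt_frobNorm {A B : Matrix (Fin p) (Fin p) ℝ} {κ : ℝ}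
    (hA : A.PosDef) (hB : B.PosDef)
    (hRSC : ∀ Δ : Matrix (Fin p) (Fin p) ℝ, Δ.IsSymm → (A + Δ).PosDef → frobNorm Δ ≤ 1 →
      traceInner (A⁻¹ - (A + Δ)⁻¹) Δ ≥ κ * frobNorm Δ ^ 2)
    (hfar : 1 < frobNorm (B - A)) :
    κ * frobNorm (B - A) ≤ traceInner (A⁻¹ - B⁻¹) (B - A) := by
  set d := frobNorm (B - A)
  have hd : 0 < d := one_pos.trans hfar
  set t := d⁻¹
  have ht : 0 < t := inv_pos.2 hd
  have ht1 : t < 1 := inv_lt_one_of_one_lt₀ hfar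
  have htd : t * d = 1 := inv_mul_cancel₀ hd.ne'
  set C := A + t • (B - A)
  have hC : C.PosDef := by
    have hconv : C = (1 - t) • A + t • B := by module
    rw [hconv]
    exact (hA.smul (sub_pos.2 ht1)).add (hB.smul ht)
  have hnear : κ ≤ t * traceInner (A⁻¹ - C⁻¹) (B - A) := by
    have := hRSC (t • (B - A)) ((hA.isSymm_sub hB).smul t) hC
      (by rw [frobNorm_smul, abs_of_pos ht, htd])
    rwa [traceInner_smul_right, frobNorm_smul, abs_of_pos ht, htd, one_pow, mul_one] at this
  have hmono : 0 ≤ traceInner (C⁻¹ - B⁻¹) (B - A) := by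
    have := traceInner_inv_sub_inv_sub_nonneg hC hB
    rwa [show B - C = (1 - t) • (B - A) by module, traceInner_smul_right,
      mul_nonneg_iff_of_pos_left (sub_pos.2 ht1)] at this
  have hsplit : traceInner (A⁻¹ - B⁻¹) (B - A)
      = traceInner (A⁻¹ - C⁻¹) (B - A) + traceInner (C⁻¹ - B⁻¹) (B - A) := by
    rw [← traceInner_add_left, sub_add_sub_cancel]
  calc κ * d ≤ t * traceInner (A⁻¹ - C⁻¹) (B - A) * d := mul_le_mul_of_nonneg_right hnear hd.le
    _ = traceInner (A⁻¹ - C⁻¹) (B - A) := by rw [mul_right_comm, htd, one_mul]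
    _ ≤ _ := by linarith

end InverseMonotonicity

theorem traceInner_sub_le_of_stationary {p : ℕ} {Γ₁ Γ₂ M₁ M₂ Δ : Matrix (Fin p) (Fin p) ℝ}
    {b lam τ₁ τ₂ : ℝ}
    (hstat : traceInner (Γ₁ - M₁) Δ ≤ b)
    (hinc : |traceInner (Γ₁ - Γ₂) Δ| ≤ τ₁ * frobNorm Δ + τ₂ * l1Norm Δ)
    (hlam : 4 * max (linfNorm (Γ₂ - M₂)) τ₂ ≤ lam) :
    traceInner (M₂ - M₁) Δ ≤ b + lam / 2 * l1Norm Δ + τ₁ * frobNorm Δ := by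
  have hsplit : traceInner (M₂ - M₁) Δ
      = traceInner (Γ₁ - M₁) Δ - traceInner (Γ₂ - M₂) Δ - traceInner (Γ₁ - Γ₂) Δ := by
    simp only [traceInner, Matrix.sub_mul, Matrix.trace_sub]
    ring
  have hl1 := l1Norm_nonneg Δ
  have hdev : |traceInner (Γ₂ - M₂) Δ| ≤ lam / 4 * l1Norm Δ :=
    (abs_traceInner_le _ _).trans <| mul_le_mul_of_nonneg_right
      (by linarith [le_max_left (linfNorm (Γ₂ - M₂)) τ₂]) hl1
  have hτ₂ : τ₂ * l1Norm Δ ≤ lam / 4 * l1Norm Δ :=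
    mul_le_mul_of_nonneg_right (by linarith [le_max_right (linfNorm (Γ₂ - M₂)) τ₂]) hl1
  rw [hsplit]
  linarith [neg_abs_le (traceInner (Γ₂ - M₂) Δ), neg_abs_le (traceInner (Γ₁ - Γ₂) Δ)]

theorem error_frobNorm_bound_general
    (p n h : ℕ)
    (x : Fin n → Fin p → ℝ)
    (Θstar Θtil : Matrix (Fin p) (Fin p) ℝ)
    (hΘstar : Θstar.PosDef) (hΘtil : Θtil.PosDef)
    (R : ℝ) (hR : 0 < R) (hΘstarR : l1Norm Θstar ≤ R) (hΘtilR : l1Norm Θtil ≤ R)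
    (wtil wstar : Fin n → ℝ)
    (κ τ₁ τ₂ lam : ℝ) (hκ : 0 < κ) (hτ₁ : 0 ≤ τ₁) (hlam : 0 < lam)
    (H1 : traceInner
        ((1 / (h : ℝ)) • ∑ i, wtil i • Matrix.vecMulVec (x i) (x i) - Θtil⁻¹)
        (Θtil - Θstar) ≤ lam * (offNorm Θstar - offNorm Θtil))
    (H2 : ∀ Δ : Matrix (Fin p) (Fin p) ℝ, Δ.IsSymm → (Θstar + Δ).PosDef →
        frobNorm Δ ≤ 1 →
        traceInner (Θstar⁻¹ - (Θstar + Δ)⁻¹) Δ ≥ κ * (frobNorm Δ) ^ 2)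
    (H3 : |traceInner
        ((1 / (h : ℝ)) • ∑ i, (wtil i - wstar i) • Matrix.vecMulVec (x i) (x i))
        (Θtil - Θstar)|
        ≤ τ₁ * frobNorm (Θtil - Θstar) + τ₂ * l1Norm (Θtil - Θstar))
    (H4a : 4 * max
        (linfNorm ((1 / (h : ℝ)) • ∑ i, wstar i • Matrix.vecMulVec (x i) (x i) - Θstar⁻¹))
        τ₂ ≤ lam)
    (H4b : lam ≤ (κ - τ₁) / (3 * R))
    (k : ℕ)
    (hk : (Finset.univ.filter
        (fun ij : Fin p × Fin p => ij.1 ≠ ij.2 ∧ Θstar ij.1 ij.2 ≠ 0)).card ≤ k) :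
    frobNorm (Θtil - Θstar) ≤ (1 / κ) * ((3 * lam / 2) * Real.sqrt ((k : ℝ) + p) + τ₁) := by
  set Δ := Θtil - Θstar
  set d := frobNorm Δ
  set s := ∑ ij ∈ supportWithDiag Θstar, |Δ ij.1 ij.2|
  simp only [sub_smul, Finset.sum_sub_distrib, smul_sub] at H3
  have hupper : traceInner (Θstar⁻¹ - Θtil⁻¹) Δ ≤ 3 * lam / 2 * s + τ₁ * d := by
    have hcomb := mul_le_mul_of_nonneg_left
      (offNorm_sub_offNorm_add_half_l1Norm_le Θstar Θtil) hlam.le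
    linarith [traceInner_sub_le_of_stationary H1 H3 H4a]
  have hsR : s ≤ 2 * R :=
    (sum_abs_le_l1Norm Δ _).trans ((l1Norm_sub_le Θtil Θstar).trans (by linarith))
  have hsk : s ≤ √((k : ℝ) + p) * d := by
    refine (sum_abs_le_sqrt_card_mul_frobNorm Δ _).trans
      (mul_le_mul_of_nonneg_right (Real.sqrt_le_sqrt ?_) (frobNorm_nonneg Δ))
    exact_mod_cast (card_supportWithDiag_le Θstar).trans (by omega)
  have hκτ : 0 < 3 * R * lam ∧ 3 * R * lam ≤ κ - τ₁ :=
    ⟨by positivity, by rwa [le_div_iff₀ (by positivity), mul_comm] at H4b⟩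
  have hd1 : d ≤ 1 := by
    by_contra! hfar
    have hfar' := mul_frobNorm_le_traceInner_of_one_lt_frobNorm hΘstar hΘtil H2 hfar
    nlinarith [mul_le_mul_of_nonneg_left hsR (by positivity : (0 : ℝ) ≤ 3 * lam / 2)]
  have hnear := H2 Δ (hΘstar.isSymm_sub hΘtil) (by rwa [add_sub_cancel]) hd1
  rw [add_sub_cancel] at hnear
  have hquad : κ * d * d ≤ (3 * lam / 2 * √((k : ℝ) + p) + τ₁) * d := by
    nlinarith [mul_le_mul_of_nonneg_left hsk (by positivity : (0 : ℝ) ≤ 3 * lam / 2)]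
  rw [one_div, ← div_eq_inv_mul, le_div_iff₀' hκ]
  rcases (show 0 ≤ d from frobNorm_nonneg Δ).eq_or_lt with hd0 | hd0
  · rw [← hd0, mul_zero]
    positivity
  · exact le_of_mul_le_mul_right hquad hd0

/-- Theorem 1, Frobenius-norm error bound. -/
theorem error_frobNorm_bound
    (p n h : ℕ) (hp : 0 < p) (hn : 0 < n) (hh : 0 < h)
    (x : Fin n → Fin p → ℝ)
    (Θstar Θtil : Matrix (Fin p) (Fin p) ℝ)
    (hΘstar : Θstar.PosDef) (hΘtil : Θtil.PosDef)
    (R : ℝ) (hR : 0 < R) (hΘstarR : l1Norm Θstar ≤ R) (hΘtilR : l1Norm Θtil ≤ R)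
    (wtil wstar : Fin n → ℝ)
    (hwtil : ∀ i, wtil i ∈ Set.Icc (0 : ℝ) 1) (hwstar : ∀ i, wstar i ∈ Set.Icc (0 : ℝ) 1)
    (κ τ₁ τ₂ lam : ℝ) (hκ : 0 < κ) (hτ₁ : 0 ≤ τ₁) (hτ₂ : 0 ≤ τ₂) (hlam : 0 < lam)
    (H1 : traceInner
        ((1 / (h : ℝ)) • ∑ i, wtil i • Matrix.vecMulVec (x i) (x i) - Θtil⁻¹)
        (Θtil - Θstar) ≤ lam * (offNorm Θstar - offNorm Θtil))
    (H2 : ∀ Δ : Matrix (Fin p) (Fin p) ℝ, Δ.IsSymm → (Θstar + Δ).PosDef →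
        frobNorm Δ ≤ 1 →
        traceInner (Θstar⁻¹ - (Θstar + Δ)⁻¹) Δ ≥ κ * (frobNorm Δ) ^ 2)
    (H3 : |traceInner
        ((1 / (h : ℝ)) • ∑ i, (wtil i - wstar i) • Matrix.vecMulVec (x i) (x i))
        (Θtil - Θstar)|
        ≤ τ₁ * frobNorm (Θtil - Θstar) + τ₂ * l1Norm (Θtil - Θstar))
    (H4a : 4 * max
        (linfNorm ((1 / (h : ℝ)) • ∑ i, wstar i • Matrix.vecMulVec (x i) (x i) - Θstar⁻¹))
        τ₂ ≤ lam)
    (H4b : lam ≤ (κ - τ₁) / (3 * R))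
    (k : ℕ)
    (hk : (Finset.univ.filter
        (fun ij : Fin p × Fin p => ij.1 ≠ ij.2 ∧ Θstar ij.1 ij.2 ≠ 0)).card ≤ k) :
    frobNorm (Θtil - Θstar) ≤ (1 / κ) * ((3 * lam / 2) * Real.sqrt ((k : ℝ) + p) + τ₁) :=
  error_frobNorm_bound_general p n h x Θstar Θtil hΘstar hΘtil R hR hΘstarR hΘtilR wtil wstar κ τ₁
    τ₂ lam hκ hτ₁ hlam H1 H2 H3 H4a H4b k hk
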